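/- arXiv:2003.13632 — 3 statements merged into one kernel-verified Lean document; each statement's English description precedes it below -/
import Mathlib

section
/- For w = e^{iβ} + δ with δ ∈ ℂ small, the Möbius map m_ℍ(w) = i(w−1)/(w+1) satisfies |m_ℍ(e^{iβ}+δ) − m_ℍ(e^{iβ})| = (1/2)·e^c·|δ|·(1 + O(|δ|)), where the implicit constant is uniform for c < 1. -/
open Complex Real

/-!
Since `m_ℍ(w) = i(w - 1)/(w + 1)`, one has exactly
`m_ℍ(z + δ) - m_ℍ(z) = 2iδ / ((z + δ + 1)(z + 1))`, so
`|m_ℍ(z + δ) - m_ℍ(z)| = (2/|z + 1|²)·|δ|·(|z + 1|/|z + δ + 1|)`.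
At the base point `z = e^{iβ}` the scale is `2/|z + 1|² = e^c/2`, and the last factor is
`1 + O(|δ|)` because `|z + 1|² = 4e^{-c} > 4/e` keeps `z + 1` uniformly away from `0` for `c < 1`.
-/

/-- The Möbius map `m_ℍ` from the exterior of the unit disc to the upper half-plane. -/
noncomputable def mobiusUpper (w : ℂ) : ℂ := I * (w - 1) / (w + 1)

theorem mobiusUpper_sub_mobiusUpper {z w : ℂ} (hz : z + 1 ≠ 0) (hw : w + 1 ≠ 0) :
    mobiusUpper w - mobiusUpper z = 2 * I * (w - z) / ((w + 1) * (z + 1)) := by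
  unfold mobiusUpper
  field_simp
  ring

theorem norm_mobiusUpper_add_sub {z δ : ℂ} (hz : z + 1 ≠ 0) (hzδ : z + δ + 1 ≠ 0) :
    ‖mobiusUpper (z + δ) - mobiusUpper z‖ =
      2 / ‖z + 1‖ ^ 2 * ‖δ‖ * (‖z + 1‖ / ‖z + δ + 1‖) := by
  have hA : ‖z + 1‖ ≠ 0 := norm_ne_zero_iff.mpr hz
  rw [mobiusUpper_sub_mobiusUpper hz hzδ, add_sub_cancel_left, norm_div, norm_mul, norm_mul,
    norm_mul, Complex.norm_two, Complex.norm_I]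
  field_simp

theorem abs_norm_div_norm_sub_one_le {E : Type*} [SeminormedAddCommGroup E] (a b : E)
    (hb : 0 < ‖b‖) : |‖a‖ / ‖b‖ - 1| ≤ ‖a - b‖ / ‖b‖ := by
  rw [← div_self hb.ne', ← sub_div, abs_div, abs_of_pos hb]
  gcongr
  exact abs_norm_sub_norm_le a b

theorem norm_add_one_sq_of_eq {c : ℝ} (hc : 0 ≤ c) {z : ℂ}
    (hz : z = (2 * Real.exp (-c) - 1 : ℝ) +
      (2 * Real.exp (-c) * Real.sqrt (Real.exp c - 1) : ℝ) * I) :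
    ‖z + 1‖ ^ 2 = 4 * Real.exp (-c) := by
  have hsqrt : Real.sqrt (Real.exp c - 1) ^ 2 = Real.exp c - 1 :=
    Real.sq_sqrt (by linarith [Real.add_one_le_exp c])
  have hexp : Real.exp (-c) * Real.exp c = 1 := by rw [← Real.exp_add, neg_add_cancel, Real.exp_zero]
  rw [Complex.sq_norm, Complex.normSq_apply, hz]
  simp only [add_re, add_im, ofReal_re, ofReal_im, mul_re, mul_im, I_re, I_im, one_re, one_im]
  linear_combination 4 * Real.exp (-c) * hexp + 4 * Real.exp (-c) ^ 2 * hsqrt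

theorem one_lt_four_mul_exp_neg {c : ℝ} (hc : c < 1) : 1 < 4 * Real.exp (-c) := by
  have hec : Real.exp c < 3 := (Real.exp_lt_exp.mpr hc).trans Real.exp_one_lt_three
  rw [Real.exp_neg, lt_mul_inv_iff₀ (Real.exp_pos c)]
  linarith

/-- For `w = e^{iβ} + δ` with `δ ∈ ℂ` small,
`|m_ℍ(e^{iβ}+δ) − m_ℍ(e^{iβ})| = (1/2)·e^c·|δ|·(1 + O(|δ|))`,
uniformly for `c < 1`. -/
theorem mobius_local_scaling_at_base_point :
    ∃ C > (0:ℝ), ∃ ε₀ > (0:ℝ), ∀ c : ℝ, 0 < c → c < 1 →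
      ∀ β : ℝ, β ∈ Set.Ioo 0 π →
        Complex.exp (Complex.I * (β : ℂ)) =
          (2 * Real.exp (-c) - 1 : ℝ) +
            (2 * Real.exp (-c) * Real.sqrt (Real.exp c - 1) : ℝ) * Complex.I →
      ∀ δ : ℂ, ‖δ‖ ≤ ε₀ →
        ∃ e : ℝ, |e| ≤ C * ‖δ‖ ∧
          ‖(Complex.I * ((Complex.exp (Complex.I * (β : ℂ)) + δ) - 1) /
                  ((Complex.exp (Complex.I * (β : ℂ)) + δ) + 1) -
                Complex.I * (Complex.exp (Complex.I * (β : ℂ)) - 1) /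
                  (Complex.exp (Complex.I * (β : ℂ)) + 1))‖
            = (1 / 2) * Real.exp c * ‖δ‖ * (1 + e) := by
  refine ⟨2, two_pos, 1 / 2, one_half_pos, fun c hc hc1 β _ hbase δ hδ => ?_⟩
  set z := Complex.exp (I * β)
  have hA2 : ‖z + 1‖ ^ 2 = 4 * Real.exp (-c) := norm_add_one_sq_of_eq hc.le hbase
  have hA : 1 ≤ ‖z + 1‖ := by nlinarith [one_lt_four_mul_exp_neg hc1, norm_nonneg (z + 1)]
  have hB : 1 / 2 ≤ ‖z + δ + 1‖ := by
    have := norm_sub_norm_le (z + 1) (z + δ + 1)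
    rw [show z + 1 - (z + δ + 1) = -δ by ring, norm_neg] at this
    linarith
  have hz : z + 1 ≠ 0 := norm_pos_iff.mp (by linarith)
  have hzδ : z + δ + 1 ≠ 0 := norm_pos_iff.mp (by linarith)
  refine ⟨‖z + 1‖ / ‖z + δ + 1‖ - 1, ?_, ?_⟩
  · calc |‖z + 1‖ / ‖z + δ + 1‖ - 1| ≤ ‖z + 1 - (z + δ + 1)‖ / ‖z + δ + 1‖ :=
          abs_norm_div_norm_sub_one_le _ _ (by linarith)
      _ = ‖δ‖ / ‖z + δ + 1‖ := by rw [show z + 1 - (z + δ + 1) = -δ by ring, norm_neg]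
      _ ≤ 2 * ‖δ‖ := by rw [div_le_iff₀ (by linarith)]; nlinarith [norm_nonneg δ]
  · have hscale : 2 / ‖z + 1‖ ^ 2 = 1 / 2 * Real.exp c := by
      rw [hA2, Real.exp_neg]
      field_simp; norm_num
    change ‖mobiusUpper (z + δ) - mobiusUpper z‖ = _
    rw [norm_mobiusUpper_add_sub hz hzδ, hscale]
    ring
end

section
/- Let f̃_c(ζ) = e^{-c/2}·√(ζ² − (e^c − 1)) be the half-plane slit map (with the branch of square root given by arg : ℂ \ [0,∞) → (0,2π)). Then for λ ∈ ℂ small, |f̃_c(±√(e^c−1) + λ)| = √2·e^{-c/2}·(e^c − 1)^{1/4}·|λ|^{1/2}·(1 + O(|λ|/c^{1/2})). -/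
open Complex Real

/-- The argument of a complex number taken in `(0, 2π)` (for `w ∉ [0,∞)`). -/
noncomputable def argPos (w : ℂ) : ℝ :=
  if Complex.arg w ≤ 0 then Complex.arg w + 2 * π else Complex.arg w

/-- The branch of the square root with `arg : ℂ \ [0,∞) → (0, 2π)`. -/
noncomputable def sqrtBranch (w : ℂ) : ℂ :=
  (Real.sqrt (‖w‖) : ℂ) * Complex.exp (Complex.I * ((argPos w / 2 : ℝ) : ℂ))

/-- The half-plane slit map `f̃_c(ζ) = e^{-c/2}·√(ζ² − (e^c − 1))`. -/
noncomputable def halfPlaneSlit (c : ℝ) (ζ : ℂ) : ℂ :=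
  (Real.exp (-c / 2) : ℂ) * sqrtBranch (ζ ^ 2 - ((Real.exp c - 1 : ℝ) : ℂ))

/-
Near `±b`, `b = √(e^c − 1)`, the radicand factors as `(±b + λ)² − b² = λ(λ ± 2b)`, so
`|f̃_c(±b + λ)| = e^{-c/2} |λ|^{1/2} |λ ± 2b|^{1/2}`. The second factor is `(2b)^{1/2}` up to the
relative error `|√t − 1| ≤ |t − 1| ≤ |λ|/(2b)`, and `2b ≥ √c` because `e^c − 1 ≥ c`.
-/

lemma norm_sqrtBranch (w : ℂ) : ‖sqrtBranch w‖ = √‖w‖ := by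
  unfold sqrtBranch
  rw [norm_mul, Complex.norm_real, Real.norm_of_nonneg (Real.sqrt_nonneg _), Complex.norm_exp]
  simp

lemma norm_halfPlaneSlit (c : ℝ) (ζ : ℂ) :
    ‖halfPlaneSlit c ζ‖ = Real.exp (-c / 2) * √‖ζ ^ 2 - ((Real.exp c - 1 : ℝ) : ℂ)‖ := by
  rw [halfPlaneSlit, norm_mul, Complex.norm_real, Real.norm_of_nonneg (Real.exp_pos _).le,
    norm_sqrtBranch]

lemma abs_sqrt_sub_one_le {t : ℝ} (ht : 0 ≤ t) : |√t - 1| ≤ |t - 1| := by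
  have hsq := Real.sq_sqrt ht
  have hnonneg := Real.sqrt_nonneg t
  rcases abs_cases (√t - 1) with ⟨h₁, _⟩ | ⟨h₁, _⟩ <;>
    rcases abs_cases (t - 1) with ⟨h₂, _⟩ | ⟨h₂, _⟩ <;> nlinarith

lemma rpow_one_div_four_eq_sqrt_sqrt {x : ℝ} (hx : 0 ≤ x) : x ^ ((1 : ℝ) / 4) = √√x := by
  rw [Real.sqrt_eq_rpow, Real.sqrt_eq_rpow, ← Real.rpow_mul hx]
  norm_num

lemma sqrt_le_sqrt_exp_sub_one (c : ℝ) : √c ≤ √(Real.exp c - 1) :=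
  Real.sqrt_le_sqrt (by linarith [Real.add_one_le_exp c])

lemma exists_sqrt_norm_mul_add_two_mul_eq {z : ℂ} (hz : z ≠ 0) (lam : ℂ) :
    ∃ e : ℝ, |e| ≤ ‖lam‖ / (2 * ‖z‖) ∧
      √‖lam * (lam + 2 * z)‖ = √2 * √‖z‖ * √‖lam‖ * (1 + e) := by
  have h2z : 0 < 2 * ‖z‖ := by positivity
  set t := ‖lam + 2 * z‖ / (2 * ‖z‖) with ht_def
  refine ⟨√t - 1, ?_, ?_⟩
  · have hnorm : |‖lam + 2 * z‖ - 2 * ‖z‖| ≤ ‖lam‖ := by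
      simpa [norm_mul] using abs_norm_sub_norm_le (lam + 2 * z) (2 * z)
    calc |√t - 1| ≤ |t - 1| := abs_sqrt_sub_one_le (by positivity)
      _ = |‖lam + 2 * z‖ - 2 * ‖z‖| / (2 * ‖z‖) := by
        rw [ht_def, div_sub_one h2z.ne', abs_div, abs_of_pos h2z]
      _ ≤ ‖lam‖ / (2 * ‖z‖) := by gcongr
  · have ht : √(2 * ‖z‖) * √t = √‖lam + 2 * z‖ := by
      rw [← Real.sqrt_mul h2z.le, mul_div_cancel₀ _ h2z.ne']
    rw [norm_mul, Real.sqrt_mul (norm_nonneg _), ← ht, Real.sqrt_mul zero_le_two]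
    ring

/-- For `λ` small,
`|f̃_c(±√(e^c−1) + λ)| = √2·e^{-c/2}·(e^c − 1)^{1/4}·|λ|^{1/2}·(1 + O(|λ|/c^{1/2}))`. -/
theorem halfPlaneSlit_local_behaviour :
    ∃ C > (0:ℝ), ∀ c : ℝ, 0 < c → c < 1 → ∀ s : ℝ, (s = 1 ∨ s = -1) →
      ∀ lam : ℂ, lam ≠ 0 → ‖lam‖ ≤ Real.sqrt c / C →
        ∃ e : ℝ, |e| ≤ C * ‖lam‖ / Real.sqrt c ∧
          ‖halfPlaneSlit c ((s * Real.sqrt (Real.exp c - 1) : ℝ) + lam)‖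
            = Real.sqrt 2 * Real.exp (-c / 2) * (Real.exp c - 1) ^ ((1:ℝ)/4) *
                ‖lam‖ ^ ((1:ℝ)/2) * (1 + e) := by
  refine ⟨1, one_pos, fun c hc _ s hs lam _ _ => ?_⟩
  set b := √(Real.exp c - 1)
  have hexp : 0 ≤ Real.exp c - 1 := by linarith [Real.add_one_le_exp c]
  have hsc : 0 < √c := Real.sqrt_pos.mpr hc
  have hb : 0 < b := hsc.trans_le (sqrt_le_sqrt_exp_sub_one c)
  have hs2 : s ^ 2 = 1 := by rcases hs with rfl | rfl <;> norm_num
  have hnorm : ‖((s * b : ℝ) : ℂ)‖ = b := by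
    rcases hs with rfl | rfl <;> simp [abs_of_pos hb]
  have hradicand : (((s * b : ℝ) : ℂ) + lam) ^ 2 - ((Real.exp c - 1 : ℝ) : ℂ)
      = lam * (lam + 2 * ((s * b : ℝ) : ℂ)) := by
    rw [← Real.sq_sqrt hexp, ← one_mul (b ^ 2), ← hs2, ← mul_pow]
    push_cast
    ring
  obtain ⟨e, he, hsqrt⟩ := exists_sqrt_norm_mul_add_two_mul_eq (z := ((s * b : ℝ) : ℂ))
    (by rw [← norm_ne_zero_iff, hnorm]; exact hb.ne') lam
  refine ⟨e, he.trans ?_, ?_⟩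
  · rw [hnorm, one_mul]
    gcongr
    linarith [sqrt_le_sqrt_exp_sub_one c]
  · rw [norm_halfPlaneSlit, hradicand, hsqrt, hnorm, rpow_one_div_four_eq_sqrt_sqrt hexp,
      ← Real.sqrt_eq_rpow]
    ring
end

section
/- Let ν > 2, T > 0, N = ⌊T/c⌋, and for 1 ≤ n < N let g_n(s) = c^{(ν/2)(1 − 2^{-n})}·s^{-[ν(1 − 2^{-n}) − 1]}. If D = c^{9/2}σ^{1/2} and σ ≤ c^{2^{2^{1/c}}}, then the ratio (σ/D)^{ν(1 − 2^{-n}) − 1} = (c^{-9/2}σ^{1/2})^{ν(1−2^{-n})−1} decays faster than any fixed power of c as c → 0, uniformly in 1 ≤ n < N, using ν(1 − 2^{-n}) − 1 ≥ ν/2 − 1 > 0. -/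
open Real

/-- For `ν > 2`, `D = c^{9/2}σ^{1/2}` and `σ(c) ≤ c^{2^{2^{1/c}}}`, the ratio
`(σ/D)^{ν(1−2^{-n})−1} = (c^{-9/2}σ^{1/2})^{ν(1−2^{-n})−1}` decays faster than any
fixed power of `c` as `c → 0⁺`, uniformly in `1 ≤ n < ⌊T/c⌋`. -/
theorem concentration_superpolynomial_decay
    (ν T : ℝ) (hν : 2 < ν) (hT : 0 < T)
    (σ : ℝ → ℝ)
    (hσ : ∀ c : ℝ, 0 < c → c < 1 →
      0 < σ c ∧ σ c ≤ c ^ ((2:ℝ) ^ ((2:ℝ) ^ (1 / c)))) :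
    ∀ p : ℝ, ∀ ε > (0:ℝ), ∃ c₀ > (0:ℝ), ∀ c : ℝ, 0 < c → c < c₀ → c < 1 →
      ∀ n : ℕ, 1 ≤ n → (n : ℝ) < ⌊T / c⌋ →
        (σ c / (c ^ ((9:ℝ)/2) * (σ c) ^ ((1:ℝ)/2))) ^ (ν * (1 - (2:ℝ) ^ (-(n:ℝ))) - 1)
          ≤ ε * c ^ p := by
  intro p ε hε
  set q : ℝ := ν / 2 - 1 with hq
  have hq0 : 0 < q := by rw [hq]; linarith
  set M : ℝ := max ((p + 1) / q) 0 with hM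
  have hM0 : 0 ≤ M := le_max_right _ _
  set K : ℝ := 2 * M + 9 with hKdef
  have hK1 : (1:ℝ) < K := by rw [hKdef]; linarith
  set L : ℝ := Real.logb 2 K with hLdef
  have hL : 0 < L := Real.logb_pos one_lt_two hK1
  set R : ℝ := max (Real.logb 2 L) 1 with hRdef
  have hR1 : (1:ℝ) ≤ R := le_max_right _ _
  have hR0 : 0 < R := lt_of_lt_of_le one_pos hR1
  refine ⟨min ε (1 / R), lt_min hε (by positivity), ?_⟩
  intro c hc hcc hc1 n hn _
  obtain ⟨hσ0, hσle⟩ := hσ c hc hc1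
  have hcε : c < ε := lt_of_lt_of_le hcc (min_le_left _ _)
  have hcR : c < 1 / R := lt_of_lt_of_le hcc (min_le_right _ _)
  have h1c : R ≤ 1 / c := by
    rw [le_div_iff₀ hc]
    rw [lt_div_iff₀ hR0] at hcR
    linarith
  set A : ℝ := (2:ℝ) ^ ((2:ℝ) ^ (1 / c)) with hAdef
  have hA : K ≤ A := by
    have h2 : L ≤ (2:ℝ) ^ (1 / c) := by
      calc L = 2 ^ Real.logb 2 L := (Real.rpow_logb two_pos (by norm_num) hL).symm
        _ ≤ 2 ^ (1 / c) := Real.rpow_le_rpow_of_exponent_le one_le_two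
            (le_trans (le_max_left _ _) h1c)
    calc K = 2 ^ L := (Real.rpow_logb two_pos (by norm_num) (by linarith)).symm
      _ ≤ A := Real.rpow_le_rpow_of_exponent_le one_le_two h2
  -- rewrite the base
  have hc92 : (0:ℝ) < c ^ ((9:ℝ)/2) := Real.rpow_pos_of_pos hc _
  have hσ12 : (0:ℝ) < σ c ^ ((1:ℝ)/2) := Real.rpow_pos_of_pos hσ0 _
  have hhalf : σ c ^ ((1:ℝ)/2) * σ c ^ ((1:ℝ)/2) = σ c := by
    rw [← Real.rpow_add hσ0]; norm_num
  have key : σ c / (c ^ ((9:ℝ)/2) * σ c ^ ((1:ℝ)/2))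
      = σ c ^ ((1:ℝ)/2) / c ^ ((9:ℝ)/2) := by
    rw [div_eq_div_iff (by positivity) hc92.ne']
    rw [mul_comm (c ^ ((9:ℝ)/2)) (σ c ^ ((1:ℝ)/2)), ← mul_assoc, hhalf]
  have hbase : σ c / (c ^ ((9:ℝ)/2) * σ c ^ ((1:ℝ)/2)) ≤ c ^ M := by
    rw [key]
    have h5 : σ c ^ ((1:ℝ)/2) ≤ c ^ (A / 2) := by
      have := Real.rpow_le_rpow hσ0.le hσle (by norm_num : (0:ℝ) ≤ 1/2)
      rwa [← Real.rpow_mul hc.le, show A * (1/2) = A / 2 by ring] at this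
    calc σ c ^ ((1:ℝ)/2) / c ^ ((9:ℝ)/2) ≤ c ^ (A/2) / c ^ ((9:ℝ)/2) := by gcongr
      _ = c ^ (A/2 - 9/2) := (Real.rpow_sub hc _ _).symm
      _ ≤ c ^ M := Real.rpow_le_rpow_of_exponent_ge hc hc1.le (by
          rw [hKdef] at hA; linarith)
  have hb0 : 0 < σ c / (c ^ ((9:ℝ)/2) * σ c ^ ((1:ℝ)/2)) := by positivity
  have hb1 : σ c / (c ^ ((9:ℝ)/2) * σ c ^ ((1:ℝ)/2)) ≤ 1 :=
    hbase.trans (Real.rpow_le_one hc.le hc1.le hM0)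
  have he : q ≤ ν * (1 - (2:ℝ) ^ (-(n:ℝ))) - 1 := by
    have h2n : (2:ℝ) ^ (-(n:ℝ)) ≤ (2:ℝ) ^ (-(1:ℝ)) :=
      Real.rpow_le_rpow_of_exponent_le one_le_two
        (neg_le_neg (by exact_mod_cast hn))
    have h21 : (2:ℝ) ^ (-(1:ℝ)) = 1/2 := by
      rw [Real.rpow_neg_one]; norm_num
    rw [h21] at h2n
    have h2pos : (0:ℝ) < (2:ℝ) ^ (-(n:ℝ)) := Real.rpow_pos_of_pos two_pos _
    rw [hq]
    nlinarith
  calc (σ c / (c ^ ((9:ℝ)/2) * σ c ^ ((1:ℝ)/2))) ^ (ν * (1 - (2:ℝ) ^ (-(n:ℝ))) - 1)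
      ≤ (σ c / (c ^ ((9:ℝ)/2) * σ c ^ ((1:ℝ)/2))) ^ q :=
        Real.rpow_le_rpow_of_exponent_ge hb0 hb1 he
    _ ≤ (c ^ M) ^ q := Real.rpow_le_rpow hb0.le hbase hq0.le
    _ = c ^ (M * q) := by rw [← Real.rpow_mul hc.le]
    _ ≤ c ^ (p + 1) := Real.rpow_le_rpow_of_exponent_ge hc hc1.le (by
        have : (p + 1) / q ≤ M := le_max_left _ _
        calc p + 1 = ((p + 1) / q) * q := by field_simp
          _ ≤ M * q := mul_le_mul_of_nonneg_right this hq0.le)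
    _ = c * c ^ p := by
        rw [Real.rpow_add hc, Real.rpow_one, mul_comm]
    _ ≤ ε * c ^ p := mul_le_mul_of_nonneg_right hcε.le
        (Real.rpow_pos_of_pos hc _).le
end
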